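/- For any n×n matrix M over a field K of characteristic zero, the space Δ(M) of polynomials whose finite difference along each row M_i is independent of x_i coincides with the space D(M) of polynomials whose directional derivative along each row M_i is independent of x_i. -/

import Mathlib

/-!
Write `T_v p = p(x - v)` and `D_v = v · ∇`. Both operators commute with `∂ᵢ = ∂/∂xᵢ`, so
`∂ᵢ(T_v p - p) = 0` iff `T_v` fixes `∂ᵢ p`, and `∂ᵢ(D_v p) = 0` iff `D_v` kills `∂ᵢ p`; it
suffices to show `T_v q = q ↔ D_v q = 0` for every polynomial `q`. Put
`φ(t) = q(x - t v) ∈ K[x][t]`, so that `φ' = -φ(D_v q)`, `φ(0) = q` and `φ(1) = T_v q`.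
If `T_v q = q` then `φ(k) = q` for all `k ∈ ℕ`, infinitely many points in characteristic zero,
so `φ` is constant and `D_v q = -φ'(0) = 0`. Conversely, if `D_v q = 0` then `φ' = 0`, so `φ`
is constant in characteristic zero and `T_v q = φ(1) = φ(0) = q`.
-/

open MvPolynomial

namespace MvPolynomial

variable {R σ : Type*} [CommRing R]

noncomputable def translate (v : σ → R) : MvPolynomial σ R →ₐ[R] MvPolynomial σ R :=
  aeval fun j => X j - C (v j)

@[simp]
theorem translate_X (v : σ → R) (j : σ) : translate v (X j) = X j - C (v j) :=
  aeval_X _ _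

theorem translate_translate (u w : σ → R) (p : MvPolynomial σ R) :
    translate w (translate u p) = translate (u + w) p := by
  rw [← AlgHom.comp_apply]
  congr 1
  refine algHom_ext fun i => ?_
  simp [translate, sub_sub, add_comm]

@[simp]
theorem translate_zero (p : MvPolynomial σ R) : translate 0 p = p := by
  simp [translate]

theorem translate_nsmul_eq_self {v : σ → R} {p : MvPolynomial σ R} (h : translate v p = p)
    (k : ℕ) : translate (k • v) p = p := by
  induction k with
  | zero => simp
  | succ k ih => rw [succ_nsmul, ← translate_translate, ih, h]

theorem pderiv_translate (v : σ → R) (i : σ) (p : MvPolynomial σ R) :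
    pderiv i (translate v p) = translate v (pderiv i p) := by
  classical
  induction p using MvPolynomial.induction_on with
  | C a => simp [translate]
  | add p q hp hq => simp [hp, hq]
  | mul_X p j hp =>
    rw [map_mul, pderiv_mul, hp, pderiv_mul, map_add, map_mul, map_mul, translate_X]
    congr 2
    by_cases h : j = i <;> simp [pderiv_X, h]

theorem pderiv_comm (i j : σ) (p : MvPolynomial σ R) :
    pderiv i (pderiv j p) = pderiv j (pderiv i p) := by
  classical
  induction p using MvPolynomial.induction_on' with
  | add p q hp hq => simp [hp, hq]
  | monomial s a =>
    rcases eq_or_ne i j with rfl | hij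
    · rfl
    · simp only [pderiv_monomial, Finsupp.tsub_apply, tsub_tsub,
        Finsupp.single_eq_of_ne hij.symm, Finsupp.single_eq_of_ne hij, tsub_zero]
      rw [add_comm (Finsupp.single j 1), mul_right_comm]

/-- `p ↦ p(x - t • v)`, a polynomial in the new variable `t` with coefficients in `R[x]`. -/
noncomputable def lineRestrict (v : σ → R) :
    MvPolynomial σ R →ₐ[R] Polynomial (MvPolynomial σ R) :=
  aeval fun j => Polynomial.C (X j) - Polynomial.C (C (v j)) * Polynomial.X

@[simp]
theorem lineRestrict_X (v : σ → R) (j : σ) :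
    lineRestrict v (X j) = Polynomial.C (X j) - Polynomial.C (C (v j)) * Polynomial.X :=
  aeval_X _ _

@[simp]
theorem lineRestrict_C (v : σ → R) (a : R) :
    lineRestrict v (C a) = Polynomial.C (C a) :=
  aeval_C _ _

theorem eval_lineRestrict (v : σ → R) (c : R) (p : MvPolynomial σ R) :
    (lineRestrict v p).eval (C c) = translate (c • v) p := by
  induction p using MvPolynomial.induction_on with
  | C a => simp
  | add p q hp hq => simp [hp, hq]
  | mul_X p j hp => simp [hp, mul_comm c]

theorem eval_zero_lineRestrict (v : σ → R) (p : MvPolynomial σ R) :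
    (lineRestrict v p).eval 0 = p := by
  simpa using eval_lineRestrict v 0 p

theorem translate_eq_self_iff_lineRestrict_eq_C [IsDomain R] [CharZero R] {v : σ → R}
    {p : MvPolynomial σ R} : translate v p = p ↔ lineRestrict v p = Polynomial.C p := by
  constructor
  · intro h
    rw [← sub_eq_zero]
    refine Polynomial.eq_zero_of_infinite_isRoot _ (Set.infinite_of_injective_forall_mem
      (f := fun k : ℕ => C (k : R)) (fun a b hab => by simpa using hab) fun k => ?_)
    simp only [Set.mem_ofPred_eq, Polynomial.IsRoot.def, Polynomial.eval_sub, Polynomial.eval_C,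
      eval_lineRestrict, Nat.cast_smul_eq_nsmul, translate_nsmul_eq_self h, sub_self]
  · intro h
    simpa [h] using (eval_lineRestrict v 1 p).symm

variable [Fintype σ]

noncomputable def dirDeriv (v : σ → R) : Derivation R (MvPolynomial σ R) (MvPolynomial σ R) :=
  ∑ j, v j • pderiv j

theorem dirDeriv_apply (v : σ → R) (p : MvPolynomial σ R) :
    dirDeriv v p = ∑ j, v j • pderiv j p := by
  simp only [dirDeriv, ← Derivation.coeFnAddMonoidHom_apply, map_sum, Finset.sum_apply]
  simp

theorem dirDeriv_X (v : σ → R) (i : σ) : dirDeriv v (X i) = C (v i) := by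
  classical
  simp [dirDeriv_apply, pderiv_X, Pi.single_apply, smul_eq_C_mul]

theorem pderiv_dirDeriv (v : σ → R) (i : σ) (p : MvPolynomial σ R) :
    pderiv i (dirDeriv v p) = dirDeriv v (pderiv i p) := by
  simp [dirDeriv_apply, pderiv_comm i]

theorem derivative_lineRestrict (v : σ → R) (p : MvPolynomial σ R) :
    Polynomial.derivative (lineRestrict v p) = -lineRestrict v (dirDeriv v p) := by
  induction p using MvPolynomial.induction_on with
  | C a => simp
  | add p q hp hq => simp [hp, hq, add_comm]
  | mul_X p j hp =>
    simp [Derivation.leibniz, hp, dirDeriv_X]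
    ring

theorem lineRestrict_eq_C_iff [IsDomain R] [CharZero R] {v : σ → R} {p : MvPolynomial σ R} :
    lineRestrict v p = Polynomial.C p ↔ dirDeriv v p = 0 := by
  constructor
  · intro h
    have h' := derivative_lineRestrict v p
    rw [h, Polynomial.derivative_C, eq_comm, neg_eq_zero] at h'
    simpa only [eval_zero_lineRestrict, Polynomial.eval_zero] using
      congr_arg (Polynomial.eval 0) h'
  · intro h
    have h' : Polynomial.derivative (lineRestrict v p) = 0 := by
      simp [derivative_lineRestrict, h]
    rw [Polynomial.eq_C_of_derivative_eq_zero h', Polynomial.coeff_zero_eq_eval_zero,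
      eval_zero_lineRestrict]

theorem translate_eq_self_iff_dirDeriv_eq_zero [IsDomain R] [CharZero R] {v : σ → R}
    {p : MvPolynomial σ R} : translate v p = p ↔ dirDeriv v p = 0 :=
  translate_eq_self_iff_lineRestrict_eq_C.trans lineRestrict_eq_C_iff

end MvPolynomial

/-- The space `Δ(M)` of polynomials whose finite difference along each row `M_i` is
independent of `x_i` coincides with the space `D(M)` of polynomials whose directional
derivative along each row `M_i` is independent of `x_i`. -/
theorem deltaSpace_eq_derivSpace
    {K : Type*} [Field K] [CharZero K] {n : ℕ}
    (M : Matrix (Fin n) (Fin n) K) :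
    {p : MvPolynomial (Fin n) K |
        ∀ i, pderiv i (aeval (fun j => X j - C (M i j)) p - p) = 0} =
    {p : MvPolynomial (Fin n) K |
        ∀ i, pderiv i (∑ j, M i j • pderiv j p) = 0} := by
  ext p
  refine forall_congr' fun i => ?_
  change pderiv i (translate (M i) p - p) = 0 ↔ _
  rw [map_sub, pderiv_translate, sub_eq_zero, translate_eq_self_iff_dirDeriv_eq_zero,
    ← pderiv_dirDeriv, dirDeriv_apply]
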